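/- arXiv:2507.17949 — 7 statements merged into one kernel-verified Lean document; each statement's English description precedes it below -/
import Mathlib

section
/- For every positive integer n, one has √(2πn)·(n/e)^n < n! < √(2πn)·(n/e)^n·e^(1/(12n)). -/
/-!
Write `s n = n! / (√(2n) (n/e)^n)` (Mathlib's `Stirling.stirlingSeq`, which tends to `√π`); the
claim is `√π < s n < √π e^{1/(12n)}`. With `r = (2n+1)⁻²`,
`log s n - log s (n+1) = ∑_{k ≥ 1} r^k / (2k+1)`. All terms are positive, so `s` strictly
decreases to `√π`. Bounding the weights `1/(2k+1)` by `1/3` (strictly for `k ≥ 2`) bounds the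
sum strictly by the geometric series `r / (3 (1 - r)) = 1/(12n) - 1/(12(n+1))`, so
`log s n - 1/(12n)` strictly increases to `log √π`.
-/

open Real Filter Topology

lemma one_div_twelve_mul_mul_add_one {x : ℝ} (hx : x ≠ 0) (hx' : x + 1 ≠ 0) :
    1 / (12 * x * (x + 1)) = 1 / (12 * x) - 1 / (12 * (x + 1)) := by
  field_simp
  ring

namespace Stirling

theorem log_stirlingSeq_sdiff_lt {n : ℕ} (hn : n ≠ 0) :
    log (stirlingSeq n) - log (stirlingSeq (n + 1)) < 1 / (12 * n * (n + 1)) := by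
  obtain ⟨m, rfl⟩ := Nat.exists_eq_add_one_of_ne_zero hn
  set r := ((1 : ℝ) / (2 * (m + 1 : ℕ) + 1)) ^ 2 with hr
  have hr0 : 0 < r := by positivity
  have hr1 : r < 1 := by
    rw [hr, div_pow, one_pow, div_lt_one (by positivity)]
    have : (0 : ℝ) < (m + 1 : ℕ) := by positivity
    nlinarith
  have hgeom : HasSum (fun j : ℕ ↦ r ^ (j + 1) / 3)
      (1 / (12 * (m + 1 : ℕ) * ((m + 1 : ℕ) + 1))) := by
    grind [((hasSum_geometric_of_lt_one hr0.le hr1).mul_right r).div_const 3]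
  refine hasSum_lt (i := 1) (fun j ↦ ?_) ?_ (log_stirlingSeq_sdiff_hasSum m) hgeom
  · simpa [hr, field] using show (3 : ℝ) ≤ 2 * (j + 1) + 1 by norm_cast; grind
  · change 1 / (2 * ((1 + 1 : ℕ) : ℝ) + 1) * r ^ (1 + 1) < r ^ (1 + 1) / 3
    norm_num
    linarith [pow_pos hr0 2]

theorem stirlingSeq_succ_lt {n : ℕ} (hn : n ≠ 0) : stirlingSeq (n + 1) < stirlingSeq n := by
  obtain ⟨m, rfl⟩ := Nat.exists_eq_add_one_of_ne_zero hn
  have hpos : 0 < log (stirlingSeq (m + 1)) - log (stirlingSeq (m + 2)) :=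
    hasSum_lt (i := 0) (fun j ↦ by positivity) (by positivity) hasSum_zero
      (log_stirlingSeq_sdiff_hasSum m)
  rwa [sub_pos, log_lt_log_iff (stirlingSeq'_pos _) (stirlingSeq'_pos _)] at hpos

theorem sqrt_pi_lt_stirlingSeq {n : ℕ} (hn : n ≠ 0) : √π < stirlingSeq n :=
  (sqrt_pi_le_stirlingSeq n.succ_ne_zero).trans_lt (stirlingSeq_succ_lt hn)

theorem log_stirlingSeq_succ_sub_le_log_sqrt_pi (n : ℕ) :
    log (stirlingSeq (n + 1)) - 1 / (12 * (n + 1)) ≤ log √π := by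
  let u (k : ℕ) : ℝ := log (stirlingSeq (k + 1)) - 1 / (12 * (k + 1))
  have hmono : Monotone u := monotone_nat_of_le_succ fun k ↦ by
    have hstep := log_stirlingSeq_sdiff_le (k + 1)
    push_cast at hstep
    rw [one_div_twelve_mul_mul_add_one (by positivity) (by positivity)] at hstep
    simp only [u, Nat.cast_add_one]
    linarith
  have hlog : Tendsto (fun k ↦ log (stirlingSeq (k + 1))) atTop (𝓝 (log √π)) :=
    ((continuousAt_log (by positivity)).tendsto.comp tendsto_stirlingSeq_sqrt_pi).comp
      (tendsto_add_atTop_nat 1)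
  have hinv : Tendsto (fun k : ℕ ↦ 1 / (12 * ((k : ℝ) + 1))) atTop (𝓝 0) :=
    tendsto_const_nhds.div_atTop <|
      (tendsto_natCast_atTop_atTop.atTop_add tendsto_const_nhds).const_mul_atTop (by norm_num)
  simpa only [sub_zero] using hmono.ge_of_tendsto (hlog.sub hinv) n

theorem stirlingSeq_lt_sqrt_pi_mul_exp {n : ℕ} (hn : n ≠ 0) :
    stirlingSeq n < √π * exp (1 / (12 * n)) := by
  have hstep := log_stirlingSeq_sdiff_lt hn
  rw [one_div_twelve_mul_mul_add_one (by exact_mod_cast hn) (by positivity)] at hstep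
  have hlog : log (stirlingSeq n) < log √π + 1 / (12 * n) := by
    linarith [log_stirlingSeq_succ_sub_le_log_sqrt_pi n]
  have hpos : 0 < stirlingSeq n := (sqrt_pi_lt_stirlingSeq hn).trans' (by positivity)
  rwa [← exp_lt_exp, exp_log hpos, exp_add, exp_log (by positivity)] at hlog

theorem factorial_eq_stirlingSeq_mul {n : ℕ} (hn : n ≠ 0) :
    (n.factorial : ℝ) = stirlingSeq n * (√(2 * n) * (n / exp 1) ^ n) := by
  have : (0 : ℝ) < n := by positivity
  rw [stirlingSeq, div_mul_cancel₀ _ (by positivity)]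

end Stirling

open Stirling in
theorem robbins_stirling (n : ℕ) (hn : 0 < n) :
    Real.sqrt (2 * π * n) * ((n : ℝ) / Real.exp 1) ^ n < (n.factorial : ℝ) ∧
    (n.factorial : ℝ) < Real.sqrt (2 * π * n) * ((n : ℝ) / Real.exp 1) ^ n *
      Real.exp (1 / (12 * n)) := by
  have hA : 0 < √(2 * n) * ((n : ℝ) / exp 1) ^ n := by positivity
  have hsplit : √(2 * π * n) = √π * √(2 * n) := by
    rw [← sqrt_mul pi_pos.le]
    ring_nf
  rw [factorial_eq_stirlingSeq_mul hn.ne', hsplit, mul_assoc]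
  constructor
  · exact mul_lt_mul_of_pos_right (sqrt_pi_lt_stirlingSeq hn.ne') hA
  · calc stirlingSeq n * (√(2 * n) * (n / exp 1) ^ n)
        < √π * exp (1 / (12 * n)) * (√(2 * n) * (n / exp 1) ^ n) :=
          mul_lt_mul_of_pos_right (stirlingSeq_lt_sqrt_pi_mul_exp hn.ne') hA
      _ = _ := by ring
end

section
/- For every real number s > 1, the Riemann zeta function satisfies ζ(s) ≤ 1 + (s+1)/(2^s·(s-1)). -/
open Set MeasureTheory

theorem zeta_upper_bound (s : ℝ) (hs : 1 < s) :
    ∑' n : ℕ+, (1 : ℝ) / (n : ℝ) ^ s ≤ 1 + (s + 1) / (2 ^ s * (s - 1)) := by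
  have hs0 : 0 < s := by linarith
  set f : ℕ → ℝ := fun n => 1 / (n : ℝ) ^ s with hf
  have hsum : Summable f := Real.summable_one_div_nat_rpow.mpr hs
  have hcoe : ∑' n : ℕ+, (1 : ℝ) / (n : ℝ) ^ s = ∑' n : ℕ, f n := by
    refine Function.Injective.tsum_eq (f := f) (g := fun n : ℕ+ => (n : ℕ))
      (fun a b h => PNat.coe_injective h) ?_
    intro n hn
    rcases Nat.eq_zero_or_pos n with rfl | hn0
    · exfalso
      apply hn
      simp [hf, Real.zero_rpow hs0.ne']
    · exact ⟨⟨n, hn0⟩, rfl⟩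
  have hint : IntegrableOn (fun x : ℝ => x ^ (-s)) (Ioi (2 : ℝ)) :=
    integrableOn_Ioi_rpow_of_lt (by linarith) two_pos
  have hIoi : ∫ x in Ioi (2 : ℝ), x ^ (-s) = 2 ^ (1 - s) / (s - 1) := by
    rw [integral_Ioi_rpow_of_lt (by linarith) two_pos]
    rw [show -s + 1 = 1 - s by ring]
    rw [div_eq_div_iff (by linarith) (by linarith)]
    ring
  have tail : ∑' n : ℕ, f (n + 3) ≤ 2 ^ (1 - s) / (s - 1) := by
    apply Real.tsum_le_of_sum_range_le (fun n => by positivity)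
    intro N
    have hanti : AntitoneOn (fun x : ℝ => x ^ (-s)) (Icc (2 : ℝ) (2 + N)) := by
      intro a ha b hb hab
      obtain ⟨ha1, -⟩ := mem_Icc.mp ha
      obtain ⟨hb1, -⟩ := mem_Icc.mp hb
      simp only
      rw [Real.rpow_neg (by linarith), Real.rpow_neg (by linarith)]
      exact inv_anti₀ (Real.rpow_pos_of_pos (by linarith) s)
        (Real.rpow_le_rpow (by linarith) hab hs0.le)
    have h1 := hanti.sum_le_integral
    have h2 : ∑ i ∈ Finset.range N, f (i + 3) =
        ∑ i ∈ Finset.range N, (fun x : ℝ => x ^ (-s)) (2 + (i + 1 : ℕ)) := by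
      refine Finset.sum_congr rfl fun i _ => ?_
      have hc : ((i + 3 : ℕ) : ℝ) = 2 + ((i + 1 : ℕ) : ℝ) := by push_cast; ring
      show 1 / ((i + 3 : ℕ) : ℝ) ^ s = (2 + ((i + 1 : ℕ) : ℝ)) ^ (-s)
      rw [hc, Real.rpow_neg (by positivity), one_div]
    have h3 : (∫ x in (2 : ℝ)..(2 + N), x ^ (-s)) ≤ ∫ x in Ioi (2 : ℝ), x ^ (-s) := by
      rw [intervalIntegral.integral_of_le (le_add_of_nonneg_right (Nat.cast_nonneg N))]
      apply setIntegral_mono_set hint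
      · filter_upwards [ae_restrict_mem measurableSet_Ioi] with x hx
        have : (0:ℝ) < x := lt_trans two_pos hx
        positivity
      · exact HasSubset.Subset.eventuallyLE Ioc_subset_Ioi_self
    calc ∑ i ∈ Finset.range N, f (i + 3)
        = ∑ i ∈ Finset.range N, (fun x : ℝ => x ^ (-s)) (2 + (i + 1 : ℕ)) := h2
      _ ≤ ∫ x in (2 : ℝ)..(2 + N), x ^ (-s) := h1
      _ ≤ ∫ x in Ioi (2 : ℝ), x ^ (-s) := h3
      _ = 2 ^ (1 - s) / (s - 1) := hIoi
  have hsplit : ∑' n : ℕ, f n = (∑ i ∈ Finset.range 3, f i) + ∑' n : ℕ, f (n + 3) :=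
    (Summable.sum_add_tsum_nat_add 3 hsum).symm
  have hsum3 : ∑ i ∈ Finset.range 3, f i = 1 + 1 / 2 ^ s := by
    rw [Finset.sum_range_succ, Finset.sum_range_succ, Finset.sum_range_one]
    simp only [hf]
    rw [Nat.cast_zero, Nat.cast_one, Nat.cast_two, Real.zero_rpow hs0.ne', Real.one_rpow]
    norm_num
  have hkey : 1 + 1 / 2 ^ s + 2 ^ (1 - s) / (s - 1) = 1 + (s + 1) / (2 ^ s * (s - 1)) := by
    have h2s : (0:ℝ) < (2:ℝ) ^ s := Real.rpow_pos_of_pos two_pos s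
    have hne : (2:ℝ) ^ s ≠ 0 := h2s.ne'
    have hne2 : s - 1 ≠ 0 := by linarith
    rw [Real.rpow_sub two_pos, Real.rpow_one]
    field_simp
    ring
  rw [hcoe, hsplit, hsum3, ← hkey]
  linarith
end

section
/- Let s be a positive integer and α, β real with α > 0, β < 0, and sβ < -α. Then ∑_{n=s}^∞ n^α·e^{nβ} ≤ s^α·e^{sβ}/(1 - e^{α/s + β}). -/
theorem tail_sum_bound (s : ℕ) (hs : 0 < s) (α β : ℝ) (hα : 0 < α) (hβ : β < 0)
    (hsβ : (s : ℝ) * β < -α) :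
    ∑' n : ℕ, ((s + n : ℕ) : ℝ) ^ α * Real.exp ((s + n : ℕ) * β) ≤
      (s : ℝ) ^ α * Real.exp (s * β) * (1 / (1 - Real.exp (α / s + β))) := by
  have hs0 : (0:ℝ) < s := by exact_mod_cast hs
  set r := Real.exp (α / s + β) with hr_def
  have hrlt : r < 1 := by
    rw [hr_def, Real.exp_lt_one_iff]
    have : α / s < -β := by
      rw [div_lt_iff₀ hs0]; nlinarith
    linarith
  have hr0 : 0 < r := Real.exp_pos _
  have key : ∀ n : ℕ, ((s + n : ℕ) : ℝ) ^ α * Real.exp (((s + n : ℕ):ℝ) * β)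
      ≤ (s:ℝ) ^ α * Real.exp (s * β) * r ^ n := by
    intro n
    push_cast
    have h1 : ((s:ℝ) + n) ^ α ≤ (s:ℝ)^α * Real.exp (α * n / s) := by
      have hle : (s:ℝ) + n ≤ s * Real.exp ((n:ℝ) / s) := by
        have h := Real.add_one_le_exp ((n:ℝ)/s)
        have : (s:ℝ) + n = s * ((n:ℝ)/s + 1) := by field_simp; ring
        rw [this]
        nlinarith
      calc ((s:ℝ)+n)^α ≤ ((s:ℝ) * Real.exp ((n:ℝ)/s))^α :=
            Real.rpow_le_rpow (by positivity) hle hα.le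
        _ = (s:ℝ)^α * Real.exp ((n:ℝ)/s)^α := Real.mul_rpow hs0.le (Real.exp_pos _).le
        _ = (s:ℝ)^α * Real.exp (α * n / s) := by
            rw [← Real.exp_mul]; ring_nf
    have h2 : Real.exp (((s:ℝ)+n) * β) = Real.exp ((s:ℝ)*β) * Real.exp ((n:ℝ)*β) := by
      rw [← Real.exp_add]; ring_nf
    have h3 : r ^ n = Real.exp (α * n / s) * Real.exp ((n:ℝ)*β) := by
      rw [hr_def, ← Real.exp_nat_mul, ← Real.exp_add]; ring_nf
    rw [h2, h3]
    nlinarith [Real.exp_pos ((n:ℝ)*β), Real.exp_pos ((s:ℝ)*β), Real.exp_pos (α*n/s),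
      mul_le_mul_of_nonneg_right h1 (Real.exp_pos (((s:ℝ))*β)).le,
      Real.rpow_nonneg (by positivity : (0:ℝ) ≤ (s:ℝ)+n) α]
  have hg : Summable (fun n : ℕ => (s:ℝ)^α * Real.exp (s*β) * r ^ n) :=
    (summable_geometric_of_lt_one hr0.le hrlt).mul_left _
  have hf : Summable (fun n : ℕ => ((s+n:ℕ):ℝ)^α * Real.exp (((s+n:ℕ):ℝ)*β)) :=
    Summable.of_nonneg_of_le (fun n => by positivity) key hg
  calc ∑' n : ℕ, ((s + n : ℕ) : ℝ) ^ α * Real.exp (((s + n : ℕ):ℝ) * β)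
      ≤ ∑' n : ℕ, (s:ℝ)^α*Real.exp ((s:ℝ)*β)*r^n := Summable.tsum_le_tsum key hf hg
    _ = (s:ℝ)^α*Real.exp ((s:ℝ)*β) * (1/(1-r)) := by
      rw [tsum_mul_left, tsum_geometric_of_lt_one hr0.le hrlt, one_div]
end

section
/- Let c(n) be defined by c(1) = 1, c(2) = -2, and c(2^n) = -2·c(2^{n-1}) - 2·c(2^{n-2}) for n ≥ 2 (with c(2^0) = c(1)). Then for all n ≥ 0: c(2^n) = 2^{n/2} if n ≡ 0 or 2 (mod 8), c(2^n) = -2^{(n+1)/2} if n ≡ 1 (mod 8), c(2^n) = 0 if n ≡ 3 or 7 (mod 8), c(2^n) = -2^{n/2} if n ≡ 4 or 6 (mod 8), and c(2^n) = 2^{(n+1)/2} if n ≡ 5 (mod 8). -/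
theorem coeff_powers_of_two (b : ℕ → ℤ) (h0 : b 0 = 1) (h1 : b 1 = -2)
    (hrec : ∀ n, 2 ≤ n → b n = -2 * b (n - 1) - 2 * b (n - 2)) :
    ∀ n : ℕ,
      ((n % 8 = 0 ∨ n % 8 = 2) → b n = 2 ^ (n / 2)) ∧
      (n % 8 = 1 → b n = -2 ^ ((n + 1) / 2)) ∧
      ((n % 8 = 3 ∨ n % 8 = 7) → b n = 0) ∧
      ((n % 8 = 4 ∨ n % 8 = 6) → b n = -2 ^ (n / 2)) ∧
      (n % 8 = 5 → b n = 2 ^ ((n + 1) / 2)) := by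
  suffices H : ∀ n : ℕ,
      (((n % 8 = 0 ∨ n % 8 = 2) → b n = 2 ^ (n / 2)) ∧
      (n % 8 = 1 → b n = -2 ^ ((n + 1) / 2)) ∧
      ((n % 8 = 3 ∨ n % 8 = 7) → b n = 0) ∧
      ((n % 8 = 4 ∨ n % 8 = 6) → b n = -2 ^ (n / 2)) ∧
      (n % 8 = 5 → b n = 2 ^ ((n + 1) / 2))) ∧
      ((((n+1) % 8 = 0 ∨ (n+1) % 8 = 2) → b (n+1) = 2 ^ ((n+1) / 2)) ∧
      ((n+1) % 8 = 1 → b (n+1) = -2 ^ ((n + 2) / 2)) ∧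
      (((n+1) % 8 = 3 ∨ (n+1) % 8 = 7) → b (n+1) = 0) ∧
      (((n+1) % 8 = 4 ∨ (n+1) % 8 = 6) → b (n+1) = -2 ^ ((n+1) / 2)) ∧
      ((n+1) % 8 = 5 → b (n+1) = 2 ^ ((n + 2) / 2))) by
    intro n
    exact (H n).1
  intro n
  induction n with
  | zero =>
    constructor
    · refine ⟨fun _ => by simp [h0], fun h => by omega, fun h => by omega,
        fun h => by omega, fun h => by omega⟩
    · refine ⟨fun h => by omega, fun _ => by norm_num [h1], fun h => by omega,
        fun h => by omega, fun h => by omega⟩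
  | succ n ih =>
    obtain ⟨ih1, ih2⟩ := ih
    refine ⟨ih2, ?_⟩
    have hb2 : b (n + 2) = -2 * b (n + 1) - 2 * b n := by
      have := hrec (n + 2) (by omega)
      simpa using this
    have h8 : n % 8 = 0 ∨ n % 8 = 1 ∨ n % 8 = 2 ∨ n % 8 = 3 ∨ n % 8 = 4 ∨
        n % 8 = 5 ∨ n % 8 = 6 ∨ n % 8 = 7 := by omega
    rcases h8 with hr | hr | hr | hr | hr | hr | hr | hr
    · -- n%8=0, (n+2)%8=2, target 2^((n+2)/2)
      have hn := ih1.1 (Or.inl hr)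
      have hn1 := ih2.2.1 (by omega)
      refine ⟨fun _ => ?_, fun h => by omega, fun h => by omega, fun h => by omega,
        fun h => by omega⟩
      have e1 : (n + 2) / 2 = n / 2 + 1 := by omega
      have e2 : (n + 2) / 2 = n / 2 + 1 := by omega
      rw [hb2, hn, hn1, e1]
      ring
    · -- n%8=1: bn = -2^((n+1)/2), bn1 = 2^((n+1)/2), target 0
      have hn := ih1.2.1 hr
      have hn1 := ih2.1 (Or.inr (by omega))
      refine ⟨fun h => by omega, fun h => by omega, fun _ => ?_, fun h => by omega,
        fun h => by omega⟩
      rw [hb2, hn, hn1]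
      ring
    · -- n%8=2: bn = 2^(n/2), bn1 = 0, target -2^((n+2)/2)
      have hn := ih1.1 (Or.inr hr)
      have hn1 := ih2.2.2.1 (Or.inl (by omega))
      refine ⟨fun h => by omega, fun h => by omega, fun h => by omega, fun _ => ?_,
        fun h => by omega⟩
      have e1 : (n + 2) / 2 = n / 2 + 1 := by omega
      rw [hb2, hn, hn1, e1]
      ring
    · -- n%8=3: bn = 0, bn1 = -2^((n+1)/2), target 2^((n+3)/2)
      have hn := ih1.2.2.1 (Or.inl hr)
      have hn1 := ih2.2.2.2.1 (Or.inl (by omega))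
      refine ⟨fun h => by omega, fun h => by omega, fun h => by omega, fun h => by omega,
        fun _ => ?_⟩
      have e1 : (n + 2 + 1) / 2 = (n + 1) / 2 + 1 := by omega
      rw [hb2, hn, hn1, e1]
      ring
    · -- n%8=4: bn = -2^(n/2), bn1 = 2^((n+2)/2), target -2^((n+2)/2)
      have hn := ih1.2.2.2.1 (Or.inl hr)
      have hn1 := ih2.2.2.2.2 (by omega)
      refine ⟨fun h => by omega, fun h => by omega, fun h => by omega, fun _ => ?_,
        fun h => by omega⟩
      have e1 : (n + 2) / 2 = n / 2 + 1 := by omega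
      rw [hb2, hn, hn1, e1]
      ring
    · -- n%8=5: bn = 2^((n+1)/2), bn1 = -2^((n+1)/2), target 0
      have hn := ih1.2.2.2.2 hr
      have hn1 := ih2.2.2.2.1 (Or.inr (by omega))
      refine ⟨fun h => by omega, fun h => by omega, fun _ => ?_, fun h => by omega,
        fun h => by omega⟩
      rw [hb2, hn, hn1]
      ring
    · -- n%8=6: bn = -2^(n/2), bn1 = 0, target 2^((n+2)/2)
      have hn := ih1.2.2.2.1 (Or.inr hr)
      have hn1 := ih2.2.2.1 (Or.inr (by omega))
      refine ⟨fun _ => ?_, fun h => by omega, fun h => by omega, fun h => by omega,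
        fun h => by omega⟩
      have e1 : (n + 2) / 2 = n / 2 + 1 := by omega
      rw [hb2, hn, hn1, e1]
      ring
    · -- n%8=7: bn = 0, bn1 = 2^((n+1)/2), target -2^((n+3)/2)
      have hn := ih1.2.2.1 (Or.inr hr)
      have hn1 := ih2.1 (Or.inl (by omega))
      refine ⟨fun h => by omega, fun _ => ?_, fun h => by omega, fun h => by omega,
        fun h => by omega⟩
      have e1 : (n + 2 + 1) / 2 = (n + 1) / 2 + 1 := by omega
      rw [hb2, hn, hn1, e1]
      ring
end

section
/- Let b(n) be the integer sequence with b(0) = 1, b(1) = -2, b(n) = -2·b(n-1) - 2·b(n-2) for n ≥ 2. Then for every ε > 0 there exists n such that 24 + ε·b(n) < 0. -/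
/-! The characteristic polynomial `X² + 2X + 2` of the recurrence has roots `-1 ± i`, whose fourth
powers are both `-4`; hence `b (n + 4) = -4 * b n`, so `b (8k + 1) = 16 ^ k * b 1 = -2 * 16 ^ k`,
which eventually drops below `-12 / ε`. -/

section Recurrence

variable {R : Type*} [CommRing R] {b : ℕ → R}

theorem add_four_eq_neg_four_mul (hrec : ∀ n, b (n + 2) = -2 * b (n + 1) - 2 * b n) (n : ℕ) :
    b (n + 4) = -4 * b n := by
  linear_combination hrec (n + 2) - 2 * hrec (n + 1) + 2 * hrec n

theorem four_mul_add_eq_neg_four_pow_mul (hrec : ∀ n, b (n + 2) = -2 * b (n + 1) - 2 * b n)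
    (k r : ℕ) : b (4 * k + r) = (-4) ^ k * b r := by
  induction k with
  | zero => simp
  | succ k ih =>
    rw [show 4 * (k + 1) + r = 4 * k + r + 4 by ring, add_four_eq_neg_four_mul hrec, ih, pow_succ]
    ring

theorem eight_mul_add_one_eq_sixteen_pow_mul (hrec : ∀ n, b (n + 2) = -2 * b (n + 1) - 2 * b n)
    (k : ℕ) : b (8 * k + 1) = 16 ^ k * b 1 := by
  rw [show 8 * k = 4 * (2 * k) by ring, four_mul_add_eq_neg_four_pow_mul hrec, pow_mul]
  norm_num

end Recurrence

theorem no_nonnegativity_sturm_bound_general (b : ℕ → ℤ) (h1 : b 1 = -2)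
    (hrec : ∀ n, 2 ≤ n → b n = -2 * b (n - 1) - 2 * b (n - 2)) :
    ∀ ε : ℝ, 0 < ε → ∃ n : ℕ, (24 : ℝ) + ε * (b n : ℝ) < 0 := by
  intro ε hε
  have hrec' : ∀ n, b (n + 2) = -2 * b (n + 1) - 2 * b n := fun n => hrec (n + 2) (by omega)
  obtain ⟨k, hk⟩ := pow_unbounded_of_one_lt (12 / ε) (by norm_num : (1 : ℝ) < 16)
  refine ⟨8 * k + 1, ?_⟩
  have hb : (b (8 * k + 1) : ℝ) = -2 * 16 ^ k := by
    rw [eight_mul_add_one_eq_sixteen_pow_mul hrec' k, h1]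
    push_cast
    ring
  rw [div_lt_iff₀ hε] at hk
  rw [hb]
  linarith

theorem no_nonnegativity_sturm_bound (b : ℕ → ℤ) (h0 : b 0 = 1) (h1 : b 1 = -2)
    (hrec : ∀ n, 2 ≤ n → b n = -2 * b (n - 1) - 2 * b (n - 2)) :
    ∀ ε : ℝ, 0 < ε → ∃ n : ℕ, (24 : ℝ) + ε * (b n : ℝ) < 0 :=
  no_nonnegativity_sturm_bound_general b h1 hrec
end

section
/- For every even integer k ≥ 64 with k ≡ 0 (mod 4), setting ℓ = ⌊k/12⌋, one has ((2π)^k·k/(k!·ζ(k)))·∑_{m=1}^{ℓ} σ_{k-1}(m) ≤ ζ(63)·√(k/(2π))·(2πe/12)^k < 1.5^k. -/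
open Real

/-- The Riemann zeta function for real arguments, as a sum over positive integers. -/
noncomputable def zetaR (s : ℝ) : ℝ := ∑' n : ℕ+, (1 : ℝ) / (n : ℝ) ^ s

/-!
Dividing `σ_{k-1}(m) = ∑_{d ∣ m} (m/d)^{k-1}` by `m^{k-1}` leaves a partial sum of `ζ(k-1) ≤ ζ(63)`,
so the sum over `m ≤ k/12` is at most `ζ(63) (k/12)^k`. Stirling's bound `k! ≥ √(2πk) (k/e)^k`
and `ζ(k) ≥ 1` bound the prefactor by `√(k/2π) (2πe/k)^k`, and the product collapses to
`ζ(63) √(k/2π) (2πe/12)^k`. For the second inequality, `ζ(63) ≤ ζ(2) < 2`; the claim is checked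
numerically at `k = 64`, and from `k` to `k + 1` the left side grows by a factor at most
`(2πe/12) √(65/64) < 1.5`.
-/

open ArithmeticFunction Finset
open scoped ArithmeticFunction.sigma

section Zeta

variable {s t : ℝ}

lemma summable_one_div_pnat_rpow (hs : 1 < s) : Summable fun n : ℕ+ => 1 / (n : ℝ) ^ s :=
  (Real.summable_one_div_nat_rpow.mpr hs).comp_injective PNat.coe_injective

lemma zetaR_eq_tsum_nat (hs : s ≠ 0) : zetaR s = ∑' n : ℕ, 1 / (n : ℝ) ^ s :=
  tsum_pnat_eq_tsum_of_eq_zero (f := fun n : ℕ => 1 / (n : ℝ) ^ s) (by simp [zero_rpow hs])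

lemma one_le_zetaR (hs : 1 < s) : 1 ≤ zetaR s := by
  simpa [zetaR] using (summable_one_div_pnat_rpow hs).le_tsum 1 fun n _ => by positivity

lemma zetaR_pos (hs : 1 < s) : 0 < zetaR s :=
  zero_lt_one.trans_le (one_le_zetaR hs)

lemma zetaR_anti (hs : 1 < s) (hst : s ≤ t) : zetaR t ≤ zetaR s :=
  Summable.tsum_le_tsum (fun n => by gcongr; exact Nat.one_le_cast.mpr n.pos)
    (summable_one_div_pnat_rpow (hs.trans_le hst)) (summable_one_div_pnat_rpow hs)

lemma zetaR_two : zetaR 2 = π ^ 2 / 6 := by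
  rw [zetaR_eq_tsum_nat two_ne_zero, ← hasSum_zeta_two.tsum_eq]
  simp_rw [rpow_two]

lemma zetaR_le_two (hs : 2 ≤ s) : zetaR s ≤ 2 := by
  have hπ : π < 3.15 := pi_lt_d2
  have hπ0 : 0 < π := pi_pos
  calc zetaR s ≤ zetaR 2 := zetaR_anti one_lt_two hs
    _ = π ^ 2 / 6 := zetaR_two
    _ ≤ 2 := by nlinarith

lemma sum_divisors_one_div_rpow_le_zetaR (hs : 1 < s) (m : ℕ) :
    ∑ d ∈ m.divisors, 1 / (d : ℝ) ^ s ≤ zetaR s := by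
  rw [zetaR_eq_tsum_nat (by linarith)]
  exact (Real.summable_one_div_nat_rpow.mpr hs).sum_le_tsum _ fun _ _ => by positivity

end Zeta

section Sigma

variable {s : ℝ} {j : ℕ}

lemma sigma_le_zetaR_mul_pow (hs : 1 < s) (hsj : s ≤ j) (m : ℕ) :
    (σ j m : ℝ) ≤ zetaR s * (m : ℝ) ^ j := by
  rw [sigma_apply, ← Nat.sum_div_divisors, Nat.cast_sum]
  calc ∑ d ∈ m.divisors, (((m / d) ^ j : ℕ) : ℝ)
      ≤ ∑ d ∈ m.divisors, (m : ℝ) ^ j * (1 / (d : ℝ) ^ s) := by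
        refine sum_le_sum fun d hd => ?_
        have hdvd := Nat.dvd_of_mem_divisors hd
        have hd1 : (1 : ℝ) ≤ d := Nat.one_le_cast.mpr (Nat.pos_of_mem_divisors hd)
        have hds : (d : ℝ) ^ s ≤ (d : ℝ) ^ j := by
          rw [← rpow_natCast]; exact rpow_le_rpow_of_exponent_le hd1 hsj
        rw [Nat.cast_pow, Nat.cast_div hdvd (by positivity), div_pow, mul_one_div]
        gcongr
    _ = (m : ℝ) ^ j * ∑ d ∈ m.divisors, 1 / (d : ℝ) ^ s := by rw [mul_sum]
    _ ≤ (m : ℝ) ^ j * zetaR s := by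
        gcongr; exact sum_divisors_one_div_rpow_le_zetaR hs m
    _ = zetaR s * (m : ℝ) ^ j := mul_comm _ _

lemma sum_Icc_sigma_le (hs : 1 < s) (hsj : s ≤ j) (n : ℕ) :
    ∑ m ∈ Icc 1 n, (σ j m : ℝ) ≤ zetaR s * (n : ℝ) ^ (j + 1) := by
  have hterm : ∀ m ∈ Icc 1 n, (σ j m : ℝ) ≤ zetaR s * (n : ℝ) ^ j := fun m hm => by
    have hZ : 0 < zetaR s := zetaR_pos hs
    refine (sigma_le_zetaR_mul_pow hs hsj m).trans ?_
    gcongr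
    exact_mod_cast (mem_Icc.mp hm).2
  calc ∑ m ∈ Icc 1 n, (σ j m : ℝ)
      ≤ #(Icc 1 n) • (zetaR s * (n : ℝ) ^ j) := sum_le_card_nsmul _ _ _ hterm
    _ = zetaR s * (n : ℝ) ^ (j + 1) := by
        simp only [Nat.card_Icc, add_tsub_cancel_right, nsmul_eq_mul]; ring

end Sigma

lemma two_pi_pow_mul_div_factorial_mul_zetaR_le {k : ℕ} (hk : 2 ≤ k) :
    (2 * π) ^ k * k / (k.factorial * zetaR k) ≤ √(k / (2 * π)) * (2 * π * exp 1 / k) ^ k := by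
  have hk0 : (0 : ℝ) < k := by positivity
  have hsqrt : √(k / (2 * π)) * √(2 * π * k) = k := by
    rw [← sqrt_mul (by positivity), show k / (2 * π) * (2 * π * k) = (k : ℝ) ^ 2 by field_simp,
      sqrt_sq hk0.le]
  have hpow : (2 * π * exp 1 / k) ^ k * (k / exp 1) ^ k = (2 * π) ^ k := by
    rw [← mul_pow]; congr 1; field_simp
  have hstirling : √(2 * π * k) * (k / exp 1) ^ k ≤ k.factorial * zetaR k :=
    (Stirling.le_factorial_stirling k).trans
      (le_mul_of_one_le_right (by positivity) (one_le_zetaR (by exact_mod_cast hk)))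
  calc (2 * π) ^ k * k / (k.factorial * zetaR k)
      ≤ (2 * π) ^ k * k / (√(2 * π * k) * (k / exp 1) ^ k) :=
        div_le_div_of_nonneg_left (by positivity) (by positivity) hstirling
    _ = √(k / (2 * π)) * (2 * π * exp 1 / k) ^ k := by
        rw [div_eq_iff (by positivity)]
        linear_combination (-((2 * π * exp 1 / k) ^ k * (k / exp 1) ^ k)) * hsqrt - (k : ℝ) * hpow

section Numerics

lemma two_pi_exp_div_twelve_le : 2 * π * exp 1 / 12 ≤ 1.4235 := by
  have hπ : π < 3.141593 := pi_lt_d6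
  have he : exp 1 < 2.7182818286 := exp_one_lt_d9
  nlinarith [mul_pos (sub_pos.mpr hπ) (sub_pos.mpr he), pi_pos, exp_pos 1]

lemma sqrt_succ_div_two_pi_le {k : ℕ} (hk : 64 ≤ k) :
    √((k + 1 : ℕ) / (2 * π)) ≤ 1.008 * √(k / (2 * π)) := by
  have hk' : (64 : ℝ) ≤ k := by exact_mod_cast hk
  rw [show (1.008 : ℝ) = √(1.008 ^ 2) from (sqrt_sq (by norm_num)).symm, ← sqrt_mul (by positivity),
    ← mul_div_assoc]
  gcongr
  push_cast
  linarith

lemma two_mul_sqrt_mul_pow_lt {k : ℕ} (hk : 64 ≤ k) :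
    2 * √(k / (2 * π)) * (2 * π * exp 1 / 12) ^ k < 1.5 ^ k := by
  have ha := two_pi_exp_div_twelve_le
  have ha0 : 0 < 2 * π * exp 1 / 12 := by positivity
  induction k, hk using Nat.le_induction with
  | base =>
    have hπ : 3.14 < π := pi_gt_d2
    have hsqrt : √((64 : ℕ) / (2 * π)) ≤ 3.3 := by
      rw [sqrt_le_left (by norm_num), div_le_iff₀ (by positivity)]
      push_cast
      nlinarith
    calc 2 * √((64 : ℕ) / (2 * π)) * (2 * π * exp 1 / 12) ^ 64 ≤ 2 * 3.3 * 1.4235 ^ 64 := by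
          gcongr
      _ < 1.5 ^ 64 := by norm_num
  | succ k hk ih =>
    calc 2 * √((k + 1 : ℕ) / (2 * π)) * (2 * π * exp 1 / 12) ^ (k + 1)
        ≤ 2 * (1.008 * √(k / (2 * π))) * (2 * π * exp 1 / 12) ^ (k + 1) := by
          gcongr; exact sqrt_succ_div_two_pi_le hk
      _ = (1.008 * (2 * π * exp 1 / 12)) * (2 * √(k / (2 * π)) * (2 * π * exp 1 / 12) ^ k) := by
          ring
      _ ≤ 1.5 * (2 * √(k / (2 * π)) * (2 * π * exp 1 / 12) ^ k) := by
          gcongr; linarith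
      _ < 1.5 * 1.5 ^ k := by gcongr
      _ = 1.5 ^ (k + 1) := (pow_succ' _ _).symm

end Numerics

theorem eisenstein_partial_sum_bound_general (k : ℕ) (hk : 64 ≤ k) :
    ((2 * π) ^ k * k / (k.factorial * zetaR k)) *
        ∑ m ∈ Finset.Icc 1 (k / 12), ((∑ d ∈ m.divisors, d ^ (k - 1) : ℕ) : ℝ) ≤
      zetaR 63 * Real.sqrt (k / (2 * π)) * (2 * π * Real.exp 1 / 12) ^ k ∧
    zetaR 63 * Real.sqrt (k / (2 * π)) * (2 * π * Real.exp 1 / 12) ^ k < 1.5 ^ k := by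
  simp_rw [← sigma_apply]
  have hZ : 0 < zetaR 63 := zetaR_pos (by norm_num)
  have hsum : ∑ m ∈ Icc 1 (k / 12), (σ (k - 1) m : ℝ) ≤ zetaR 63 * (k / 12 : ℝ) ^ k := by
    have h := sum_Icc_sigma_le (s := 63) (j := k - 1) (by norm_num) (by norm_cast; omega) (k / 12)
    rw [Nat.sub_add_cancel (by omega)] at h
    refine h.trans ?_
    gcongr
    exact Nat.cast_div_le
  constructor
  · calc ((2 * π) ^ k * k / (k.factorial * zetaR k)) * ∑ m ∈ Icc 1 (k / 12), (σ (k - 1) m : ℝ)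
        ≤ (√(k / (2 * π)) * (2 * π * exp 1 / k) ^ k) * (zetaR 63 * (k / 12 : ℝ) ^ k) := by
          gcongr
          exact two_pi_pow_mul_div_factorial_mul_zetaR_le (by omega)
      _ = zetaR 63 * √(k / (2 * π)) * (2 * π * exp 1 / 12) ^ k := by
          rw [mul_mul_mul_comm, ← mul_pow]; field_simp
  · calc zetaR 63 * √(k / (2 * π)) * (2 * π * exp 1 / 12) ^ k
        ≤ 2 * √(k / (2 * π)) * (2 * π * exp 1 / 12) ^ k := by
          gcongr; exact zetaR_le_two (by norm_num)
      _ < 1.5 ^ k := two_mul_sqrt_mul_pow_lt hk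

theorem eisenstein_partial_sum_bound (k : ℕ) (hk : 64 ≤ k) (hk4 : k % 4 = 0) :
    ((2 * π) ^ k * k / (k.factorial * zetaR k)) *
        ∑ m ∈ Finset.Icc 1 (k / 12), ((∑ d ∈ m.divisors, d ^ (k - 1) : ℕ) : ℝ) ≤
      zetaR 63 * Real.sqrt (k / (2 * π)) * (2 * π * Real.exp 1 / 12) ^ k ∧
    zetaR 63 * Real.sqrt (k / (2 * π)) * (2 * π * Real.exp 1 / 12) ^ k < 1.5 ^ k :=
  eisenstein_partial_sum_bound_general k hk
end

section
/- Any nonzero modular form for SL₂(ℤ) of weight k ≡ 2 (mod 4) has at least one negative Fourier coefficient. -/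
/-!
Suppose all coefficients `a n` are nonnegative and put `F t = ∑ a n e^{-2πnt}`, so that
`f(it) = F t ≥ 0` for `t > 0`. The transformation under `S : z ↦ -1/z` gives
`f(i/t) = (it)^k f(it) = -t^k f(it)` because `i^k = -1`, so `F(1/t) = -t^k F t`, and both sides
being nonnegative forces `F = 0` on `(0, ∞)`. Finally `‖f z‖ ≤ F (Im z) = 0` by the triangle
inequality, so `f = 0`.
-/

open Real Complex UpperHalfPlane MatrixGroups CongruenceSubgroup

theorem norm_tsum_le_tsum_norm_of_finiteDimensional {ι E : Type*} [NormedAddCommGroup E]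
    [NormedSpace ℝ E] [FiniteDimensional ℝ E] (f : ι → E) : ‖∑' i, f i‖ ≤ ∑' i, ‖f i‖ := by
  by_cases hf : Summable f
  · exact norm_tsum_le_tsum_norm (summable_norm_iff.mpr hf)
  · simpa [tsum_eq_zero_of_not_summable hf] using tsum_nonneg fun i => norm_nonneg (f i)

lemma norm_cexp_two_pi_I_mul (n : ℕ) (z : ℂ) :
    ‖cexp (2 * π * Complex.I * n * z)‖ = Real.exp (-(2 * π * n * z.im)) := by
  rw [norm_exp]
  congr 1
  simp

lemma cexp_two_pi_I_mul_I_mul (n : ℕ) (t : ℝ) :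
    cexp (2 * π * Complex.I * n * (Complex.I * t)) = Real.exp (-(2 * π * n * t)) := by
  rw [ofReal_exp]
  congr 1
  push_cast
  ring_nf
  rw [I_sq]
  ring

lemma norm_tsum_qSeries_le_of_nonneg {a : ℕ → ℝ} (ha : ∀ n, 0 ≤ a n) (z : ℂ) :
    ‖∑' n : ℕ, (a n : ℂ) * cexp (2 * π * Complex.I * n * z)‖ ≤
      ∑' n : ℕ, a n * Real.exp (-(2 * π * n * z.im)) := by
  refine (norm_tsum_le_tsum_norm_of_finiteDimensional _).trans_eq (tsum_congr fun n => ?_)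
  rw [norm_mul, norm_real, Real.norm_of_nonneg (ha n), norm_cexp_two_pi_I_mul]

lemma tsum_qSeries_I_mul (a : ℕ → ℝ) (t : ℝ) :
    ∑' n : ℕ, (a n : ℂ) * cexp (2 * π * Complex.I * n * (Complex.I * t)) =
      ((∑' n : ℕ, a n * Real.exp (-(2 * π * n * t)) : ℝ) : ℂ) := by
  rw [ofReal_tsum]
  exact tsum_congr fun n => by rw [cexp_two_pi_I_mul_I_mul, ofReal_mul]

lemma I_mul_ofReal_zpow_of_emod_four_eq_two {k : ℤ} (hk : k % 4 = 2) (t : ℝ) :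
    (Complex.I * t) ^ k = -((t ^ k : ℝ) : ℂ) := by
  rw [mul_zpow, I_zpow_eq_zpow_mod, hk, ofReal_zpow]
  norm_num

lemma UpperHalfPlane.coe_pos_real_smul_I (t : {x : ℝ // 0 < x}) :
    ((t • UpperHalfPlane.I : ℍ) : ℂ) = Complex.I * (t : ℝ) := by
  simp [mul_comm]

lemma ModularGroup.S_smul_pos_real_smul_I (t : {x : ℝ // 0 < x}) :
    ModularGroup.S • t • UpperHalfPlane.I = t⁻¹ • UpperHalfPlane.I := by
  ext1
  rw [modular_S_smul]
  simp [mul_comm]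

namespace SlashInvariantForm

variable {F : Type*} [FunLike F ℍ ℂ] {k : ℤ} [SlashInvariantFormClass F (Gamma 1) k]

lemma apply_S_smul_of_level_one (f : F) (z : ℍ) :
    f (ModularGroup.S • z) = (z : ℂ) ^ k * f z := by
  rw [slash_action_eqn_SL'' f (mem_Gamma_one _) z, ModularGroup.denom_S]

lemma apply_inv_smul_I_of_emod_four_eq_two (hk : k % 4 = 2) (f : F) (t : {x : ℝ // 0 < x}) :
    f (t⁻¹ • UpperHalfPlane.I) = -(((t : ℝ) ^ k : ℝ) : ℂ) * f (t • UpperHalfPlane.I) := by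
  rw [← ModularGroup.S_smul_pos_real_smul_I, apply_S_smul_of_level_one,
    UpperHalfPlane.coe_pos_real_smul_I, I_mul_ofReal_zpow_of_emod_four_eq_two hk]

end SlashInvariantForm

theorem negative_coefficient_weight_two_mod_four (k : ℤ) (hk : k % 4 = 2)
    (f : ModularForm (Gamma 1) k) (hf0 : f ≠ 0) (a : ℕ → ℝ)
    (hf : ∀ z : ℍ, f z = ∑' n : ℕ,
      (a n : ℂ) * Complex.exp (2 * π * Complex.I * n * (z : ℂ))) :
    ∃ n : ℕ, a n < 0 := by
  by_contra! ha
  set F : ℝ → ℝ := fun t => ∑' n : ℕ, a n * Real.exp (-(2 * π * n * t))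
  have hF_nonneg (t : ℝ) : 0 ≤ F t := tsum_nonneg fun n => mul_nonneg (ha n) (Real.exp_pos _).le
  have hf_imAxis (t : {x : ℝ // 0 < x}) : f (t • UpperHalfPlane.I) = F t := by
    rw [hf, UpperHalfPlane.coe_pos_real_smul_I, tsum_qSeries_I_mul]
  have hF_eq_zero (t : {x : ℝ // 0 < x}) : F t = 0 := by
    have h := SlashInvariantForm.apply_inv_smul_I_of_emod_four_eq_two hk f t
    rw [hf_imAxis, hf_imAxis, ← ofReal_neg, ← ofReal_mul, ofReal_inj] at h
    rw [Positive.coe_inv] at h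
    nlinarith [hF_nonneg t, hF_nonneg (t : ℝ)⁻¹, zpow_pos t.2 k]
  refine hf0 (ModularForm.ext fun z => norm_le_zero_iff.mp ?_)
  calc ‖f z‖ ≤ F z.im := by rw [hf]; exact norm_tsum_qSeries_le_of_nonneg ha z
    _ = 0 := hF_eq_zero ⟨z.im, z.im_pos⟩
end
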